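/- In a q-tame persistence module (H_b, i_{b,a}), for fixed 0 < a < b ≤ ∞ define for c ∈ (a,b]: V_c = {h ∈ H_c : α(h) ≤ a, β(h) ≤ b}, W_c = {h ∈ H_c : α(h) < a, β(h) ≤ b}, Z_c = {h ∈ H_c : α(h) ≤ a, β(h) < b}. Then for a < c < d ≤ b, the structure map i_{d,c} induces an isomorphism V_c/(W_c + Z_c) ≅ V_d/(W_d + Z_d). In particular dim V_c/(W_c+Z_c) is independent of c ∈ (a,b]. -/

import Mathlib

/-!
The structure map `i_{d,c}` preserves the conditions `α ≤ a`, `α < a`, `β ≤ b`, and sends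
`Z_c` into `Z_d` (an element dying before `d` goes to `0`), so it induces a map of
subquotients. By q-tameness the images `im i_{y,c}`, which grow with `y`, have minimal
dimension at some `y₀ ∈ (a,c)` and are therefore constant for `y ∈ (a,y₀]`: being born by `a`
at `c` just means lying in `im i_{y₀,c}`. Lifting `g ∈ V_d` to `H_{y₀}` and pushing it to `H_c`
gives surjectivity. For injectivity, if `i_{d,c} h = w + z` with `w ∈ W_d`, `z ∈ Z_d`, then `w`
is the image of an element born before `a`; its image `w'` in `H_c` lies in `W_c`, and
`h - w'` lies in `Z_c`.
-/

open scoped ENNReal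

open LinearMap (range ker)

theorem LinearMap.exists_subquotientEquiv {R M N : Type*} [Ring R] [AddCommGroup M]
    [Module R M] [AddCommGroup N] [Module R N] (f : M →ₗ[R] N) {V K : Submodule R M}
    {V' K' : Submodule R N}
    (hV : ∀ x ∈ V, f x ∈ V') (hK : K ≤ K'.comap f) (hsurj : ∀ y ∈ V', ∃ x ∈ V, f x = y)
    (hinj : ∀ x ∈ V, f x ∈ K' → x ∈ K) :
    ∃ e : (V ⧸ K.comap V.subtype) ≃ₗ[R] (V' ⧸ K'.comap V'.subtype),
      ∀ x (hx : x ∈ V) (hx' : f x ∈ V'),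
        e (Submodule.Quotient.mk ⟨x, hx⟩) = Submodule.Quotient.mk ⟨f x, hx'⟩ := by
  set g := (K'.comap V'.subtype).mkQ ∘ₗ f.restrict hV
  have hg : Function.Surjective g := by
    rintro ⟨y, hy⟩
    obtain ⟨x, hx, rfl⟩ := hsurj y hy
    exact ⟨⟨x, hx⟩, rfl⟩
  have hker : K.comap V.subtype = ker g := by
    ext ⟨x, hx⟩
    rw [LinearMap.mem_ker, LinearMap.comp_apply, Submodule.mkQ_apply,
      Submodule.Quotient.mk_eq_zero]
    exact ⟨fun hxK => hK hxK, hinj x hx⟩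
  exact ⟨(Submodule.quotEquivOfEq _ _ hker).trans (g.quotKerEquivOfSurjective hg),
    fun _ _ _ => rfl⟩

namespace PersistenceModule

variable {F : Type*} [Field F] {H : ℝ≥0∞ → Type*} [∀ x, AddCommGroup (H x)]
  [∀ x, Module F (H x)] (i : ∀ x y : ℝ≥0∞, H x →ₗ[F] H y)

def IsFunctorial : Prop :=
  ∀ x y z : ℝ≥0∞, x ≤ y → y ≤ z → (i y z).comp (i x y) = i x z

noncomputable def birth (x : ℝ≥0∞) (h : H x) : ℝ≥0∞ :=
  sInf {y | y < x ∧ h ∈ range (i y x)}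

noncomputable def death (x : ℝ≥0∞) (h : H x) : ℝ≥0∞ :=
  sInf {y | x < y ∧ h ∈ ker (i x y)}

variable {i} {a b c d x : ℝ≥0∞}

theorem birth_lt_iff {h : H x} : birth i x h < a ↔ ∃ y < a, y < x ∧ h ∈ range (i y x) := by
  simp only [birth, sInf_lt_iff]
  exact ⟨fun ⟨y, ⟨hyx, hy⟩, hya⟩ => ⟨y, hya, hyx, hy⟩,
    fun ⟨y, hya, hyx, hy⟩ => ⟨y, ⟨hyx, hy⟩, hya⟩⟩

theorem death_lt_iff {h : H x} : death i x h < b ↔ ∃ y < b, x < y ∧ h ∈ ker (i x y) := by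
  simp only [death, sInf_lt_iff]
  exact ⟨fun ⟨y, ⟨hxy, hy⟩, hyb⟩ => ⟨y, hyb, hxy, hy⟩,
    fun ⟨y, hyb, hxy, hy⟩ => ⟨y, ⟨hxy, hy⟩, hyb⟩⟩

namespace IsFunctorial

theorem apply_apply (hi : IsFunctorial i) {x y z : ℝ≥0∞} (hxy : x ≤ y) (hyz : y ≤ z)
    (h : H x) :
    i y z (i x y h) = i x z h := by
  rw [← hi x y z hxy hyz, LinearMap.comp_apply]

theorem range_mono (hi : IsFunctorial i) {x y z : ℝ≥0∞} (hxy : x ≤ y) (hyz : y ≤ z) :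
    range (i x z) ≤ range (i y z) := by
  rintro _ ⟨u, rfl⟩
  exact ⟨i x y u, hi.apply_apply hxy hyz u⟩

theorem ker_mono (hi : IsFunctorial i) {x y z : ℝ≥0∞} (hxy : x ≤ y) (hyz : y ≤ z) :
    ker (i x y) ≤ ker (i x z) := by
  intro h hh
  rw [LinearMap.mem_ker] at hh ⊢
  rw [← hi.apply_apply hxy hyz h, hh, map_zero]

theorem birth_le_iff (hi : IsFunctorial i) (hax : a < x) {h : H x} :
    birth i x h ≤ a ↔ ∀ y, a < y → y < x → h ∈ range (i y x) := by
  constructor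
  · intro hle y hay hyx
    obtain ⟨y', hy'y, hy'x, hy'⟩ := birth_lt_iff.1 (hle.trans_lt hay)
    exact hi.range_mono hy'y.le hyx.le hy'
  · intro hall
    by_contra! hlt
    obtain ⟨y, hay, hy⟩ := exists_between (lt_min hlt hax)
    have hyx : y < x := hy.trans_le (min_le_right _ _)
    exact (hy.trans_le (min_le_left _ _)).not_ge (sInf_le ⟨hyx, hall y hay hyx⟩)

theorem death_le_iff (hi : IsFunctorial i) (hxb : x ≤ b) {h : H x} :
    death i x h ≤ b ↔ ∀ y, b < y → h ∈ ker (i x y) := by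
  constructor
  · intro hle y hby
    obtain ⟨y', hy'y, hxy', hy'⟩ := death_lt_iff.1 (hle.trans_lt hby)
    exact hi.ker_mono hxy'.le hy'y.le hy'
  · intro hall
    by_contra! hlt
    obtain ⟨y, hby, hy⟩ := exists_between hlt
    exact hy.not_ge (sInf_le ⟨hxb.trans_lt hby, hall y hby⟩)

theorem exists_birth_le_iff_mem_range (hi : IsFunctorial i) (hac : a < c)
    (htame : ∀ y, a < y → y < c → FiniteDimensional F (range (i y c))) :
    ∃ y₀, a < y₀ ∧ y₀ < c ∧ ∀ h : H c, birth i c h ≤ a ↔ h ∈ range (i y₀ c) := by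
  obtain ⟨y₀, ⟨hay₀, hy₀c⟩, hmin⟩ :=
    (InvImage.wf (fun y => Module.finrank F (range (i y c))) wellFounded_lt).has_min
      (Set.Ioo a c) (Set.nonempty_Ioo.2 hac)
  refine ⟨y₀, hay₀, hy₀c, fun h => ?_⟩
  rw [hi.birth_le_iff hac]
  refine ⟨fun hall => hall y₀ hay₀ hy₀c, fun hh y hay hyc => ?_⟩
  rcases le_total y₀ y with hy₀y | hyy₀
  · exact hi.range_mono hy₀y hyc.le hh
  · have := htame y₀ hay₀ hy₀c
    have hrange : range (i y c) = range (i y₀ c) :=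
      Submodule.eq_of_le_of_finrank_le (hi.range_mono hyy₀ hy₀c.le)
        (not_lt.1 (hmin y ⟨hay, hyc⟩))
    rwa [hrange]

theorem birth_apply_le (hi : IsFunctorial i) (hac : a < c) (hcd : c ≤ d) {h : H c}
    (hh : birth i c h ≤ a) : birth i d (i c d h) ≤ a := by
  rw [hi.birth_le_iff (hac.trans_le hcd)]
  intro y hay hyd
  rcases lt_or_ge y c with hyc | hcy
  · obtain ⟨u, rfl⟩ := (hi.birth_le_iff hac).1 hh y hay hyc
    exact ⟨u, (hi.apply_apply hyc.le hcd u).symm⟩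
  · exact ⟨i c y h, hi.apply_apply hcy hyd.le h⟩

theorem birth_apply_lt (hi : IsFunctorial i) (hcd : c ≤ d) {h : H c} (hh : birth i c h < a) :
    birth i d (i c d h) < a := by
  obtain ⟨y, hya, hyc, u, rfl⟩ := birth_lt_iff.1 hh
  exact birth_lt_iff.2 ⟨y, hya, hyc.trans_le hcd, u, (hi.apply_apply hyc.le hcd u).symm⟩

theorem death_apply_le_iff (hi : IsFunctorial i) (hcd : c ≤ d) (hdb : d ≤ b) {h : H c} :
    death i d (i c d h) ≤ b ↔ death i c h ≤ b := by
  rw [hi.death_le_iff hdb, hi.death_le_iff (hcd.trans hdb)]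
  refine forall₂_congr fun y hby => ?_
  rw [LinearMap.mem_ker, LinearMap.mem_ker, hi.apply_apply hcd (hdb.trans hby.le)]

theorem death_lt_of_apply (hi : IsFunctorial i) (hcd : c ≤ d) {h : H c}
    (hh : death i d (i c d h) < b) : death i c h < b := by
  obtain ⟨y, hyb, hdy, hy⟩ := death_lt_iff.1 hh
  refine death_lt_iff.2 ⟨y, hyb, hcd.trans_lt hdy, ?_⟩
  rwa [LinearMap.mem_ker, ← hi.apply_apply hcd hdy.le]

theorem apply_eq_zero_or_death_apply_lt (hi : IsFunctorial i) (hcd : c ≤ d) {h : H c}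
    (hh : death i c h < b) : i c d h = 0 ∨ death i d (i c d h) < b := by
  obtain ⟨y, hyb, hcy, hy⟩ := death_lt_iff.1 hh
  rcases le_or_gt y d with hyd | hdy
  · left
    rw [← hi.apply_apply hcy.le hyd, LinearMap.mem_ker.1 hy, map_zero]
  · right
    refine death_lt_iff.2 ⟨y, hyb, hdy, ?_⟩
    rwa [LinearMap.mem_ker, hi.apply_apply hcd hdy.le]

theorem exists_apply_eq (hi : IsFunctorial i) (hac : a < c) (hcd : c ≤ d) (hdb : d ≤ b)
    (htame : ∀ y, a < y → y < c → FiniteDimensional F (range (i y c)))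
    {g : H d} (hg : birth i d g ≤ a) (hg' : death i d g ≤ b) :
    ∃ h, (birth i c h ≤ a ∧ death i c h ≤ b) ∧ i c d h = g := by
  obtain ⟨y₀, hay₀, hy₀c, hbirth⟩ := hi.exists_birth_le_iff_mem_range hac htame
  obtain ⟨u, rfl⟩ := (hi.birth_le_iff (hac.trans_le hcd)).1 hg y₀ hay₀ (hy₀c.trans_le hcd)
  have hu : i c d (i y₀ c u) = i y₀ d u := hi.apply_apply hy₀c.le hcd u
  refine ⟨i y₀ c u, ⟨(hbirth _).2 ⟨u, rfl⟩, ?_⟩, hu⟩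
  rwa [← hi.death_apply_le_iff hcd hdb, hu]

theorem exists_add_eq_of_apply_eq_add (hi : IsFunctorial i) (hac : a < c) (hcd : c ≤ d)
    (hdb : d ≤ b) {h : H c} (hh : birth i c h ≤ a) {w z : H d} (hw : birth i d w < a)
    (hw' : death i d w ≤ b) (hz : death i d z < b) (hsum : i c d h = w + z) :
    ∃ w' z', (birth i c w' < a ∧ death i c w' ≤ b) ∧ (birth i c z' ≤ a ∧ death i c z' < b) ∧
      w' + z' = h := by
  obtain ⟨y, hya, -, u, rfl⟩ := birth_lt_iff.1 hw
  have hyc : y < c := hya.trans hac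
  have hu : i c d (i y c u) = i y d u := hi.apply_apply hyc.le hcd u
  refine ⟨i y c u, h - i y c u, ⟨birth_lt_iff.2 ⟨y, hya, hyc, u, rfl⟩, ?_⟩, ⟨?_, ?_⟩,
    add_sub_cancel _ _⟩
  · rwa [← hi.death_apply_le_iff hcd hdb, hu]
  · rw [hi.birth_le_iff hac] at hh ⊢
    exact fun y' hay' hy'c =>
      sub_mem (hh y' hay' hy'c) (hi.range_mono (hya.trans hay').le hy'c.le ⟨u, rfl⟩)
  · apply hi.death_lt_of_apply hcd
    rwa [map_sub, hu, hsum, add_sub_cancel_left]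

end IsFunctorial

end PersistenceModule

theorem stmt6_general {F : Type*} [Field F]
    (H : ℝ≥0∞ → Type*) [∀ x, AddCommGroup (H x)] [∀ x, Module F (H x)]
    (i : ∀ x y : ℝ≥0∞, H x →ₗ[F] H y)
    (hcomp : ∀ x y z : ℝ≥0∞, x ≤ y → y ≤ z → (i y z).comp (i x y) = i x z)
    (htame : ∀ x y : ℝ≥0∞, 0 < x → x < y →
      FiniteDimensional F (LinearMap.range (i x y)))
    (a b c d : ℝ≥0∞) (ha : 0 < a) (hac : a < c) (hcd : c < d) (hdb : d ≤ b)
    (α β : ∀ x : ℝ≥0∞, H x → ℝ≥0∞)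
    (hα : ∀ x h, α x h = sInf {y : ℝ≥0∞ | y < x ∧ h ∈ LinearMap.range (i y x)})
    (hβ : ∀ x h, β x h = sInf {y : ℝ≥0∞ | x < y ∧ h ∈ LinearMap.ker (i x y)})
    (Vc Wc Zc : Submodule F (H c)) (Vd Wd Zd : Submodule F (H d))
    (hVc : ∀ h, h ∈ Vc ↔ α c h ≤ a ∧ β c h ≤ b)
    (hWc : ∀ h, h ∈ Wc ↔ α c h < a ∧ β c h ≤ b)
    (hZc : ∀ h, h ∈ Zc ↔ α c h ≤ a ∧ β c h < b)
    (hVd : ∀ h, h ∈ Vd ↔ α d h ≤ a ∧ β d h ≤ b)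
    (hWd : ∀ h, h ∈ Wd ↔ α d h < a ∧ β d h ≤ b)
    (hZd : ∀ h, h ∈ Zd ↔ α d h ≤ a ∧ β d h < b) :
    (∀ h ∈ Vc, i c d h ∈ Vd) ∧
    (∃ e : (Vc ⧸ Submodule.comap Vc.subtype (Wc ⊔ Zc)) ≃ₗ[F]
           (Vd ⧸ Submodule.comap Vd.subtype (Wd ⊔ Zd)),
      ∀ (h : H c) (hh : h ∈ Vc) (hh' : i c d h ∈ Vd),
        e (Submodule.Quotient.mk ⟨h, hh⟩) = Submodule.Quotient.mk ⟨i c d h, hh'⟩) ∧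
    Module.finrank F (Vc ⧸ Submodule.comap Vc.subtype (Wc ⊔ Zc)) =
      Module.finrank F (Vd ⧸ Submodule.comap Vd.subtype (Wd ⊔ Zd)) := by
  have hi : PersistenceModule.IsFunctorial i := hcomp
  obtain rfl : α = PersistenceModule.birth i := funext fun x => funext (hα x)
  obtain rfl : β = PersistenceModule.death i := funext fun x => funext (hβ x)
  have htame' : ∀ y, a < y → y < c → FiniteDimensional F (LinearMap.range (i y c)) :=
    fun y hay hyc => htame y c (ha.trans hay) hyc
  have hV : ∀ h ∈ Vc, i c d h ∈ Vd := fun h hh => by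
    rw [hVc] at hh
    exact (hVd _).2
      ⟨hi.birth_apply_le hac hcd.le hh.1, (hi.death_apply_le_iff hcd.le hdb).2 hh.2⟩
  have hK : Wc ⊔ Zc ≤ (Wd ⊔ Zd).comap (i c d) := by
    refine sup_le (fun h hh => ?_) (fun h hh => ?_)
    · rw [hWc] at hh
      exact Submodule.mem_sup_left ((hWd _).2
        ⟨hi.birth_apply_lt hcd.le hh.1, (hi.death_apply_le_iff hcd.le hdb).2 hh.2⟩)
    · rw [hZc] at hh
      rcases hi.apply_eq_zero_or_death_apply_lt hcd.le hh.2 with h0 | hlt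
      · simp [h0]
      · exact Submodule.mem_sup_right ((hZd _).2 ⟨hi.birth_apply_le hac hcd.le hh.1, hlt⟩)
  have hsurj : ∀ g ∈ Vd, ∃ h ∈ Vc, i c d h = g := fun g hg => by
    rw [hVd] at hg
    obtain ⟨h, hh, rfl⟩ := hi.exists_apply_eq hac hcd.le hdb htame' hg.1 hg.2
    exact ⟨h, (hVc h).2 hh, rfl⟩
  have hinj : ∀ h ∈ Vc, i c d h ∈ Wd ⊔ Zd → h ∈ Wc ⊔ Zc := fun h hh hsum => by
    obtain ⟨w, hw, z, hz, hwz⟩ := Submodule.mem_sup.1 hsum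
    rw [hWd] at hw
    rw [hZd] at hz
    obtain ⟨w', z', hw', hz', rfl⟩ := hi.exists_add_eq_of_apply_eq_add hac hcd.le hdb
      ((hVc h).1 hh).1 hw.1 hw.2 hz.2 hwz.symm
    exact Submodule.add_mem_sup ((hWc _).2 hw') ((hZc _).2 hz')
  obtain ⟨e, he⟩ := (i c d).exists_subquotientEquiv hV hK hsurj hinj
  exact ⟨hV, ⟨e, he⟩, e.finrank_eq⟩

/-- In a q-tame persistence module `(H_b, i_{b,a})` over `(0,∞]`, for fixed
`0 < a < b ≤ ∞` and `a < c < d ≤ b`, with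
`V_c = {h : α(h) ≤ a, β(h) ≤ b}`, `W_c = {h : α(h) < a, β(h) ≤ b}`,
`Z_c = {h : α(h) ≤ a, β(h) < b}` (as subspaces of `H_c`, similarly at `d`),
the structure map `i_{d,c}` maps `V_c` into `V_d` and induces an isomorphism
`V_c/(W_c + Z_c) ≅ V_d/(W_d + Z_d)`; in particular `dim V_c/(W_c+Z_c)` is
independent of `c ∈ (a,b]`. -/
theorem stmt6 {F : Type*} [Field F]
    (H : ℝ≥0∞ → Type*) [∀ x, AddCommGroup (H x)] [∀ x, Module F (H x)]
    (i : ∀ x y : ℝ≥0∞, H x →ₗ[F] H y)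
    (hid : ∀ x, i x x = LinearMap.id)
    (hcomp : ∀ x y z : ℝ≥0∞, x ≤ y → y ≤ z → (i y z).comp (i x y) = i x z)
    (htame : ∀ x y : ℝ≥0∞, 0 < x → x < y →
      FiniteDimensional F (LinearMap.range (i x y)))
    (a b c d : ℝ≥0∞) (ha : 0 < a) (hac : a < c) (hcd : c < d) (hdb : d ≤ b)
    (α β : ∀ x : ℝ≥0∞, H x → ℝ≥0∞)
    (hα : ∀ x h, α x h = sInf {y : ℝ≥0∞ | y < x ∧ h ∈ LinearMap.range (i y x)})
    (hβ : ∀ x h, β x h = sInf {y : ℝ≥0∞ | x < y ∧ h ∈ LinearMap.ker (i x y)})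
    (Vc Wc Zc : Submodule F (H c)) (Vd Wd Zd : Submodule F (H d))
    (hVc : ∀ h, h ∈ Vc ↔ α c h ≤ a ∧ β c h ≤ b)
    (hWc : ∀ h, h ∈ Wc ↔ α c h < a ∧ β c h ≤ b)
    (hZc : ∀ h, h ∈ Zc ↔ α c h ≤ a ∧ β c h < b)
    (hVd : ∀ h, h ∈ Vd ↔ α d h ≤ a ∧ β d h ≤ b)
    (hWd : ∀ h, h ∈ Wd ↔ α d h < a ∧ β d h ≤ b)
    (hZd : ∀ h, h ∈ Zd ↔ α d h ≤ a ∧ β d h < b) :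
    (∀ h ∈ Vc, i c d h ∈ Vd) ∧
    (∃ e : (Vc ⧸ Submodule.comap Vc.subtype (Wc ⊔ Zc)) ≃ₗ[F]
           (Vd ⧸ Submodule.comap Vd.subtype (Wd ⊔ Zd)),
      ∀ (h : H c) (hh : h ∈ Vc) (hh' : i c d h ∈ Vd),
        e (Submodule.Quotient.mk ⟨h, hh⟩) = Submodule.Quotient.mk ⟨i c d h, hh'⟩) ∧
    Module.finrank F (Vc ⧸ Submodule.comap Vc.subtype (Wc ⊔ Zc)) =
      Module.finrank F (Vd ⧸ Submodule.comap Vd.subtype (Wd ⊔ Zd)) :=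
  stmt6_general H i hcomp htame a b c d ha hac hcd hdb α β hα hβ Vc Wc Zc Vd Wd Zd hVc hWc hZc hVd
    hWd hZd
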